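/- Let K be an N×N real symmetric positive definite matrix. Define D : (0, ∞) → ℝ by D(α) := (1/N) · tr( (1/2)((K² + αK)^{1/2} − K) ). Then D is continuous and strictly increasing on (0, ∞), D(α) → 0 as α → 0⁺, and D(α) → ∞ as α → ∞. Consequently, for every real d > 0 there exists a unique α > 0 with D(α) = d. -/

import Mathlib

open Matrix Classical

/-- The positive semidefinite square root of a matrix (junk value `0` if the matrix is not
positive semidefinite). -/
noncomputable def matSqrt {N : ℕ} (A : Matrix (Fin N) (Fin N) ℝ) : Matrix (Fin N) (Fin N) ℝ :=
  if h : A.PosSemidef then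
    (h.1.eigenvectorUnitary : Matrix (Fin N) (Fin N) ℝ) *
      diagonal ((↑) ∘ (h.1.eigenvalues · |>.sqrt)) *
      (star h.1.eigenvectorUnitary : Matrix (Fin N) (Fin N) ℝ)
  else 0

/-- The optimal distortion covariance matrix
`K_{Z*}(K, α) = (1/2)((K² + αK)^{1/2} − K)`. -/
noncomputable def Kzstar {N : ℕ} (K : Matrix (Fin N) (Fin N) ℝ) (α : ℝ) :
    Matrix (Fin N) (Fin N) ℝ :=
  (1 / 2 : ℝ) • (matSqrt (K ^ 2 + α • K) - K)

/-!
The square root of `K² + αK` is the functional calculus of `x ↦ √(x² + αx)` at `K`, so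
`N · D(α) = ½ ∑ᵢ (√(λᵢ² + αλᵢ) - λᵢ)` over the eigenvalues `λᵢ > 0` of `K`. Each summand is
continuous and strictly increasing in `α ≥ 0`, vanishes at `α = 0` and grows like `√(αλᵢ)`;
existence of the solution of `D(α) = d` is then the intermediate value theorem and uniqueness
is strict monotonicity.
-/

open Filter Set

theorem Matrix.IsHermitian.trace_cfc {n 𝕜 : Type*} [Fintype n] [DecidableEq n] [RCLike 𝕜]
    {A : Matrix n n 𝕜} (hA : A.IsHermitian) (f : ℝ → ℝ) :
    (cfc f A).trace = ∑ i, (f (hA.eigenvalues i) : 𝕜) := by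
  rw [hA.cfc_eq, IsHermitian.cfc, Unitary.conjStarAlgAut_apply, trace_mul_cycle,
    Unitary.coe_star_mul_self, Matrix.one_mul, trace_diagonal]
  rfl

theorem Matrix.PosSemidef.matSqrt_eq_cfc {N : ℕ} {A : Matrix (Fin N) (Fin N) ℝ}
    (hA : A.PosSemidef) : matSqrt A = cfc Real.sqrt A := by
  rw [matSqrt, dif_pos hA, hA.1.cfc_eq, IsHermitian.cfc, Unitary.conjStarAlgAut_apply]
  rfl

theorem Matrix.IsHermitian.sq_add_smul_eq_cfc {n : Type*} [Fintype n] [DecidableEq n]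
    {K : Matrix n n ℝ} (hK : K.IsHermitian) (α : ℝ) :
    K ^ 2 + α • K = cfc (fun x => x ^ 2 + α * x) K := by
  rw [cfc_add .., cfc_pow_id .., cfc_const_mul_id ..]

/-- `N · D(α)` in terms of the eigenvalues `μ` of `K`. -/
noncomputable def distortionSum {ι : Type*} [Fintype ι] (μ : ι → ℝ) (α : ℝ) : ℝ :=
  ∑ i, (√(μ i ^ 2 + α * μ i) - μ i) / 2

theorem Matrix.PosSemidef.trace_Kzstar {N : ℕ} {K : Matrix (Fin N) (Fin N) ℝ}
    (hK : K.PosSemidef) {α : ℝ} (hα : 0 ≤ α) :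
    (Kzstar K α).trace = distortionSum hK.1.eigenvalues α := by
  have hpsd : (K ^ 2 + α • K).PosSemidef := (hK.pow 2).add (hK.smul hα)
  rw [Kzstar, trace_smul, trace_sub, hpsd.matSqrt_eq_cfc, hK.1.sq_add_smul_eq_cfc,
    ← cfc_comp' Real.sqrt (fun x => x ^ 2 + α * x) K (ha := hK.1.isSelfAdjoint),
    hK.1.trace_cfc, hK.1.trace_eq_sum_eigenvalues, distortionSum, ← Finset.sum_div,
    Finset.sum_sub_distrib]
  simp [div_eq_inv_mul]

section distortionSum

variable {ι : Type*} [Fintype ι] {μ : ι → ℝ}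

theorem continuous_distortionSum (μ : ι → ℝ) : Continuous (distortionSum μ) := by
  unfold distortionSum
  fun_prop

theorem distortionSum_zero (hμ : ∀ i, 0 ≤ μ i) : distortionSum μ 0 = 0 := by
  simp [distortionSum, Real.sqrt_sq (hμ _)]

theorem strictMonoOn_distortionSum [Nonempty ι] (hμ : ∀ i, 0 < μ i) :
    StrictMonoOn (distortionSum μ) (Ici 0) := by
  intro a ha b _ hab
  refine Finset.sum_lt_sum_of_nonempty Finset.univ_nonempty fun i _ => ?_
  have hlt : μ i ^ 2 + a * μ i < μ i ^ 2 + b * μ i := by gcongr; exact hμ i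
  have := Real.sqrt_lt_sqrt (add_nonneg (sq_nonneg _) (mul_nonneg ha (hμ i).le)) hlt
  linarith

theorem tendsto_distortionSum_atTop [Nonempty ι] (hμ : ∀ i, 0 < μ i) :
    Tendsto (distortionSum μ) atTop atTop := by
  obtain ⟨i⟩ := ‹Nonempty ι›
  have hterm : Tendsto (fun α => (√(μ i ^ 2 + α * μ i) - μ i) / 2) atTop atTop :=
    (tendsto_atTop_add_const_right _ _ (Real.tendsto_sqrt_atTop.comp
      (tendsto_atTop_add_const_left _ _ (tendsto_id.atTop_mul_const (hμ i))))).atTop_div_const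
      two_pos
  refine tendsto_atTop_mono' _ ?_ hterm
  filter_upwards [eventually_ge_atTop 0] with α hα
  refine Finset.single_le_sum (f := fun j => (√(μ j ^ 2 + α * μ j) - μ j) / 2)
    (fun j _ => ?_) (Finset.mem_univ i)
  have : μ j ≤ √(μ j ^ 2 + α * μ j) :=
    (Real.le_sqrt' (hμ j)).2 (le_add_of_nonneg_right (mul_nonneg hα (hμ j).le))
  linarith

end distortionSum

theorem existsUnique_eq_of_strictMonoOn_Ici {f : ℝ → ℝ} {a d : ℝ}
    (hcont : ContinuousOn f (Ici a)) (hmono : StrictMonoOn f (Ici a)) (htop : Tendsto f atTop atTop)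
    (hd : f a < d) : ∃! x, a < x ∧ f x = d := by
  obtain ⟨b, hdb, hab⟩ := ((htop.eventually_gt_atTop d).and (eventually_gt_atTop a)).exists
  obtain ⟨x, hx, rfl⟩ := intermediate_value_Ioo hab.le (hcont.mono Icc_subset_Ici_self) ⟨hd, hdb⟩
  refine ⟨x, ⟨hx.1, rfl⟩, fun y ⟨hy, hyx⟩ => ?_⟩
  exact hmono.injOn (mem_Ici.2 hy.le) (mem_Ici.2 hx.1.le) hyx

theorem stmt_12 {N : ℕ} (hN : 0 < N) (K : Matrix (Fin N) (Fin N) ℝ) (hK : K.PosDef) :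
    ContinuousOn (fun α : ℝ => ((N : ℝ))⁻¹ * Matrix.trace (Kzstar K α)) (Set.Ioi 0) ∧
    StrictMonoOn (fun α : ℝ => ((N : ℝ))⁻¹ * Matrix.trace (Kzstar K α)) (Set.Ioi 0) ∧
    Filter.Tendsto (fun α : ℝ => ((N : ℝ))⁻¹ * Matrix.trace (Kzstar K α))
      (nhdsWithin 0 (Set.Ioi 0)) (nhds 0) ∧
    Filter.Tendsto (fun α : ℝ => ((N : ℝ))⁻¹ * Matrix.trace (Kzstar K α))
      Filter.atTop Filter.atTop ∧
    ∀ d : ℝ, 0 < d → ∃! α : ℝ, 0 < α ∧ ((N : ℝ))⁻¹ * Matrix.trace (Kzstar K α) = d := by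
  set D := fun α : ℝ => ((N : ℝ))⁻¹ * Matrix.trace (Kzstar K α)
  have : Nonempty (Fin N) := ⟨⟨0, hN⟩⟩
  have hinv : (0 : ℝ) < (N : ℝ)⁻¹ := by positivity
  set μ := hK.1.eigenvalues
  have hμ : ∀ i, 0 < μ i := hK.eigenvalues_pos
  have hD : EqOn D (fun α => (N : ℝ)⁻¹ * distortionSum μ α) (Ici 0) := fun α hα =>
    congrArg _ (hK.posSemidef.trace_Kzstar hα)
  have hcont : ContinuousOn D (Ici 0) :=
    ((continuous_distortionSum μ).const_mul _).continuousOn.congr hD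
  have hmono : StrictMonoOn D (Ici 0) :=
    ((strictMono_mul_left_of_pos hinv).comp_strictMonoOn
      (strictMonoOn_distortionSum hμ)).congr hD.symm
  have hzero : D 0 = 0 := by
    simp only [hD self_mem_Ici, distortionSum_zero fun i => (hμ i).le, mul_zero]
  have htop : Tendsto D atTop atTop :=
    ((tendsto_distortionSum_atTop hμ).const_mul_atTop hinv).congr'
      (eventuallyEq_of_mem (Ici_mem_atTop 0) hD.symm)
  refine ⟨hcont.mono Ioi_subset_Ici_self, hmono.mono Ioi_subset_Ici_self, ?_, htop,
    fun d hd => existsUnique_eq_of_strictMonoOn_Ici hcont hmono htop (hzero.trans_lt hd)⟩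
  simpa only [hzero] using
    (hcont 0 self_mem_Ici).tendsto.mono_left (nhdsWithin_mono 0 Ioi_subset_Ici_self)
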